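/- The dilation operator 𝒟 = 2t∂_t + xΔ_x T_x^{-1} − (1/2)T_x^{-1} + 1 satisfies [E, 𝒟] = 2E, where E = Δ_x² − 2m∂_t. Consequently, if E φ = 0 then E(𝒟φ) = 0, so 𝒟 maps solutions of the space-discretized Schrödinger equation to solutions. -/

import Mathlib

noncomputable section

/-- Forward space difference with step `σ`. -/
def Dx (σ : ℝ) (φ : ℝ → ℝ → ℝ) : ℝ → ℝ → ℝ := fun x t => (φ (x + σ) t - φ x t) / σ

/-- Inverse space shift `T_x^{-1}`. -/
def Tinv (σ : ℝ) (φ : ℝ → ℝ → ℝ) : ℝ → ℝ → ℝ := fun x t => φ (x - σ) t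

/-- Time derivative `∂_t`. -/
def Dt (φ : ℝ → ℝ → ℝ) : ℝ → ℝ → ℝ := fun x t => deriv (φ x) t

/-- Discrete dilation `𝒟 = 2t∂_t + xΔ_x T_x^{-1} − (1/2)T_x^{-1} + 1`. -/
def Dop (σ : ℝ) (φ : ℝ → ℝ → ℝ) : ℝ → ℝ → ℝ :=
  fun x t => 2 * t * Dt φ x t + x * Dx σ (Tinv σ φ) x t - (1/2) * Tinv σ φ x t + φ x t

/-- Space-discretized Schrödinger operator `E = Δ_x² − 2m∂_t`. -/
def Eop (σ m : ℝ) (φ : ℝ → ℝ → ℝ) : ℝ → ℝ → ℝ :=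
  fun x t => Dx σ (Dx σ φ) x t - 2 * m * Dt φ x t

theorem discrete_dilation_symmetry (σ m : ℝ) (hσ : σ ≠ 0)
    (φ : ℝ → ℝ → ℝ) (hφ : ContDiff ℝ (⊤ : ℕ∞) (fun p : ℝ × ℝ => φ p.1 p.2)) :
    (∀ x t, Eop σ m (Dop σ φ) x t - Dop σ (Eop σ m φ) x t = 2 * Eop σ m φ x t) ∧
    ((∀ x t, Eop σ m φ x t = 0) → ∀ x t, Eop σ m (Dop σ φ) x t = 0) := by
  have h1 : ∀ a : ℝ, ContDiff ℝ (⊤ : ℕ∞) (φ a) := by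
    intro a
    exact hφ.comp (contDiff_const.prodMk contDiff_id)
  have hd1 : ∀ (a : ℝ) (s : ℝ), HasDerivAt (φ a) (deriv (φ a) s) s := fun a s =>
    (((h1 a).differentiable (by simp)) s).hasDerivAt
  have h1i : ∀ a : ℝ, ContDiff ℝ (⊤ : ℕ∞) (φ a) := fun a => (h1 a).of_le (by simp)
  have hd2 : ∀ (a : ℝ) (s : ℝ), HasDerivAt (deriv (φ a)) (deriv (deriv (φ a)) s) s := fun a s =>
    ((((contDiff_infty_iff_deriv.mp (h1i a)).2).differentiable (by simp)) s).hasDerivAt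
  have key : ∀ x t, Eop σ m (Dop σ φ) x t - Dop σ (Eop σ m φ) x t = 2 * Eop σ m φ x t := by
    intro x t
    -- explicit form of Dop σ φ x
    have hfun1 : Dop σ φ x = fun s =>
        2 * s * deriv (φ x) s + x * ((φ x s - φ (x - σ) s) / σ)
          - 1/2 * φ (x - σ) s + φ x s := by
      funext s
      simp only [Dop, Dx, Tinv, Dt, add_sub_cancel_right]
    have hD1 : HasDerivAt (fun s =>
        2 * s * deriv (φ x) s + x * ((φ x s - φ (x - σ) s) / σ)
          - 1/2 * φ (x - σ) s + φ x s)
        (2 * deriv (φ x) t + 2 * t * deriv (deriv (φ x)) t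
          + x * ((deriv (φ x) t - deriv (φ (x - σ)) t) / σ)
          - 1/2 * deriv (φ (x - σ)) t + deriv (φ x) t) t := by
      have hA : HasDerivAt (fun s : ℝ => 2 * s * deriv (φ x) s)
          (2 * deriv (φ x) t + 2 * t * deriv (deriv (φ x)) t) t := by
        have := ((hasDerivAt_id t).const_mul (2 : ℝ)).mul (hd2 x t)
        exact this.congr_deriv (by simp only [id]; ring)
      have hB : HasDerivAt (fun s => x * ((φ x s - φ (x - σ) s) / σ))
          (x * ((deriv (φ x) t - deriv (φ (x - σ)) t) / σ)) t :=
        (((hd1 x t).sub (hd1 (x - σ) t)).div_const σ).const_mul x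
      have hC : HasDerivAt (fun s => 1/2 * φ (x - σ) s) (1/2 * deriv (φ (x - σ)) t) t :=
        (hd1 (x - σ) t).const_mul (1/2)
      exact ((hA.add hB).sub hC).add (hd1 x t)
    have e1 : Dt (Dop σ φ) x t =
        2 * deriv (φ x) t + 2 * t * deriv (deriv (φ x)) t
          + x * ((deriv (φ x) t - deriv (φ (x - σ)) t) / σ)
          - 1/2 * deriv (φ (x - σ)) t + deriv (φ x) t := by
      simp only [Dt]
      rw [hfun1]
      exact hD1.deriv
    -- explicit form of Eop σ m φ a for a ∈ {x, x-σ}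
    have hfun2 : ∀ a : ℝ, Eop σ m φ a = fun s =>
        ((φ (a + σ + σ) s - φ (a + σ) s) / σ - (φ (a + σ) s - φ a s) / σ) / σ
          - 2 * m * deriv (φ a) s := by
      intro a; funext s
      simp only [Eop, Dx, Dt]
    have hD2 : ∀ a : ℝ, HasDerivAt (fun s =>
        ((φ (a + σ + σ) s - φ (a + σ) s) / σ - (φ (a + σ) s - φ a s) / σ) / σ
          - 2 * m * deriv (φ a) s)
        (((deriv (φ (a + σ + σ)) t - deriv (φ (a + σ)) t) / σ
            - (deriv (φ (a + σ)) t - deriv (φ a) t) / σ) / σ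
          - 2 * m * deriv (deriv (φ a)) t) t := by
      intro a
      exact (((((hd1 (a+σ+σ) t).sub (hd1 (a+σ) t)).div_const σ).sub
        (((hd1 (a+σ) t).sub (hd1 a t)).div_const σ)).div_const σ).sub
        ((hd2 a t).const_mul (2*m))
    have e2 : Dt (Eop σ m φ) x t =
        ((deriv (φ (x + σ + σ)) t - deriv (φ (x + σ)) t) / σ
            - (deriv (φ (x + σ)) t - deriv (φ x) t) / σ) / σ
          - 2 * m * deriv (deriv (φ x)) t := by
      simp only [Dt]
      rw [hfun2 x]
      exact (hD2 x).deriv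
    rw [show Eop σ m (Dop σ φ) x t
        = Dx σ (Dx σ (Dop σ φ)) x t - 2 * m * Dt (Dop σ φ) x t from rfl,
      show Dop σ (Eop σ m φ) x t
        = 2 * t * Dt (Eop σ m φ) x t + x * Dx σ (Tinv σ (Eop σ m φ)) x t
          - (1/2) * Tinv σ (Eop σ m φ) x t + Eop σ m φ x t from rfl,
      e1, e2]
    simp only [Eop, Dop, Dx, Tinv, Dt, add_sub_cancel_right, sub_add_cancel]
    field_simp
    ring
  refine ⟨key, fun h x t => ?_⟩
  have hz : Dop σ (Eop σ m φ) x t = 0 := by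
    have hf : ∀ a : ℝ, Eop σ m φ a = fun _ => (0 : ℝ) := by
      intro a; funext s; exact h a s
    simp [Dop, Dx, Tinv, Dt, hf]
  have := key x t
  rw [hz, h x t] at this
  simpa using this
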